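/- Let G = (V,E) with V = {1,...,n}, N_m = {1,...,m}, and G*(N_m) defined as the graph on N_m with edge {u,v} iff there is a path in G between u and v whose intermediate vertices lie in V − N_m. Fix 2 ≤ m ≤ n and U ⊆ N_{m−1} such that G*(N_{m−1}) \ U is connected. Then at least one of G*(N_m) \ U and G*(N_m) \ (U ∪ {m}) is connected. -/

import Mathlib

/-- The graph `G*(S)` on vertex subset `S`: distinct `u, v ∈ S` are adjacent iff
there is a path (walk) between `u` and `v` in `G` all of whose intermediate
vertices lie outside `S`. Vertices outside `S` are isolated. -/
def GStar {V : Type} (G : SimpleGraph V) (S : Set V) : SimpleGraph V where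
  Adj u v := u ≠ v ∧ u ∈ S ∧ v ∈ S ∧
    ∃ p : G.Walk u v, ∀ x ∈ p.support, x ≠ u → x ≠ v → x ∉ S
  symm := by
    refine ⟨?_⟩
    rintro u v ⟨hne, hu, hv, p, hp⟩
    refine ⟨hne.symm, hv, hu, p.reverse, ?_⟩
    intro x hx hxv hxu
    exact hp x (by simpa [SimpleGraph.Walk.support_reverse] using hx) hxu hxv
  loopless := ⟨fun u h => h.1 rfl⟩

/-- `a` and `b` are joined by a walk in `G` whose vertices all lie in `A`
(i.e. they are in the same component of the induced subgraph on `A`). -/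
def ReachIn {V : Type} (G : SimpleGraph V) (A : Set V) (a b : V) : Prop :=
  ∃ p : G.Walk a b, ∀ x ∈ p.support, x ∈ A

/-- The vertex set `A` is connected in `H` (restricted to `A`). -/
def ConnOn {V : Type} (H : SimpleGraph V) (A : Set V) : Prop :=
  A.Nonempty ∧ ∀ a ∈ A, ∀ b ∈ A, ReachIn H A a b

/-- The vertex set `A` is disconnected in `H` (restricted to `A`). -/
def DiscOn {V : Type} (H : SimpleGraph V) (A : Set V) : Prop :=
  ∃ a ∈ A, ∃ b ∈ A, ¬ ReachIn H A a b

/-!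
Write `S = N_{m-1}`, `w = m`, so that `N_m = S ∪ {w}`. An edge `uv` of `G*(S)` comes from a
`u`–`v` path of `G` with interior outside `S`; if that path avoids `w` it is still an edge of
`G*(S ∪ {w})`, otherwise cutting the path at `w` gives the two edges `uw` and `wv`. Hence any walk
of `G*(S) \ U` survives in `G*(S ∪ {w})`, possibly detouring through `w`. If `w` has a neighbour in
`S \ U`, then `G*(S ∪ {w}) \ U` is connected; if not, no detour is ever needed and
`G*(S ∪ {w}) \ (U ∪ {w})` is connected.
-/

open SimpleGraph

variable {V : Type}

section ReachIn

variable {H H' : SimpleGraph V} {A B : Set V} {a b c : V}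

lemma ReachIn.refl (ha : a ∈ A) : ReachIn H A a a :=
  ⟨Walk.nil, by simp [ha]⟩

lemma ReachIn.symm (h : ReachIn H A a b) : ReachIn H A b a := by
  obtain ⟨p, hp⟩ := h
  exact ⟨p.reverse, fun x hx => hp x (by simpa using hx)⟩

lemma ReachIn.trans (h : ReachIn H A a b) (h' : ReachIn H A b c) : ReachIn H A a c := by
  obtain ⟨p, hp⟩ := h
  obtain ⟨q, hq⟩ := h'
  refine ⟨p.append q, fun x hx => ?_⟩
  rcases (Walk.mem_support_append_iff _ _).1 hx with hx | hx
  exacts [hp x hx, hq x hx]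

lemma ReachIn.of_adj (h : H.Adj a b) (ha : a ∈ A) (hb : b ∈ A) : ReachIn H A a b :=
  ⟨Walk.cons h Walk.nil, by simp [ha, hb]⟩

lemma ReachIn.of_forall_adj (hAB : A ⊆ B)
    (hadj : ∀ x ∈ A, ∀ y ∈ A, H.Adj x y → ReachIn H' B x y) (h : ReachIn H A a b) :
    ReachIn H' B a b := by
  obtain ⟨p, hp⟩ := h
  induction p with
  | nil => exact .refl (hAB (hp _ (by simp)))
  | @cons x y z hxy q ih =>
    have hx : x ∈ A := hp x (by simp)
    have hy : y ∈ A := hp y (by simp)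
    exact (hadj x hx y hy hxy).trans (ih fun t ht => hp t (by simp [ht]))

lemma connOn_of_forall_reachIn (hz : c ∈ A) (h : ∀ a ∈ A, ReachIn H A a c) : ConnOn H A :=
  ⟨⟨c, hz⟩, fun a ha b hb => (h a ha).trans (h b hb).symm⟩

end ReachIn

section GStar

variable {G : SimpleGraph V} {S A : Set V} {u v w : V}

lemma gStar_insert_adj_of_isPath {p : G.Walk u v} (hp : p.IsPath)
    (hint : ∀ x ∈ p.support, x ≠ u → x ≠ v → x ∉ S) (hu : u ∈ S)
    (hwp : w ∈ p.support) (hwu : w ≠ u) (hwv : w ≠ v) :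
    (GStar G (insert w S)).Adj u w := by
  classical
  refine ⟨hwu.symm, Set.mem_insert_of_mem _ hu, Set.mem_insert _ _, p.takeUntil w hwp, ?_⟩
  intro x hx hxu hxw
  have hxv : x ≠ v := by
    rintro rfl
    exact Walk.endpoint_notMem_support_takeUntil hp hwp hwv.symm hx
  rintro (rfl | hxS)
  exacts [hxw rfl, hint x (p.support_takeUntil_subset_support hwp hx) hxu hxv hxS]

lemma gStar_insert_adj_or_of_adj (hw : w ∉ S) (h : (GStar G S).Adj u v) :
    (GStar G (insert w S)).Adj u v ∨
      (GStar G (insert w S)).Adj u w ∧ (GStar G (insert w S)).Adj w v := by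
  classical
  obtain ⟨huv, hu, hv, p, hp⟩ := h
  -- on a path, `v` cannot occur before `w`, so cutting at `w` keeps the interiors off `S`
  set q := p.bypass
  have hint : ∀ x ∈ q.support, x ≠ u → x ≠ v → x ∉ S := fun x hx =>
    hp x (p.support_bypass_subset_support hx)
  by_cases hwq : w ∈ q.support
  · have hwu : w ≠ u := fun h => hw (h ▸ hu)
    have hwv : w ≠ v := fun h => hw (h ▸ hv)
    refine .inr ⟨gStar_insert_adj_of_isPath p.bypass_isPath hint hu hwq hwu hwv, ?_⟩
    refine (gStar_insert_adj_of_isPath p.bypass_isPath.reverse (fun x hx hxv hxu => ?_) hv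
      (by simpa using hwq) hwv hwu).symm
    exact hint x (by simpa using hx) hxu hxv
  · refine .inl ⟨huv, Set.mem_insert_of_mem _ hu, Set.mem_insert_of_mem _ hv, q, ?_⟩
    rintro x hx hxu hxv (rfl | hxS)
    exacts [hwq hx, hint x hx hxu hxv hxS]

lemma ReachIn.gStar_insert (hw : w ∉ S) (h : ReachIn (GStar G S) A u v) :
    ReachIn (GStar G (insert w S)) (insert w A) u v := by
  refine h.of_forall_adj (Set.subset_insert _ _) fun x hx y hy hxy => ?_
  have hx' := Set.mem_insert_of_mem w hx
  have hy' := Set.mem_insert_of_mem w hy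
  rcases gStar_insert_adj_or_of_adj hw hxy with hxy | ⟨hxw, hwy⟩
  · exact .of_adj hxy hx' hy'
  · exact (ReachIn.of_adj hxw hx' (Set.mem_insert _ _)).trans
      (.of_adj hwy (Set.mem_insert _ _) hy')

lemma ReachIn.gStar_insert_of_forall_not_adj (hw : w ∉ S)
    (hno : ∀ z ∈ A, ¬ (GStar G (insert w S)).Adj w z) (h : ReachIn (GStar G S) A u v) :
    ReachIn (GStar G (insert w S)) A u v := by
  refine h.of_forall_adj subset_rfl fun x hx y hy hxy => ?_
  rcases gStar_insert_adj_or_of_adj hw hxy with hxy | ⟨hxw, -⟩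
  exacts [.of_adj hxy hx hy, absurd hxw.symm (hno x hx)]

theorem connOn_gStar_insert_or (hw : w ∉ S) (hA : ConnOn (GStar G S) A) :
    ConnOn (GStar G (insert w S)) (insert w A) ∨ ConnOn (GStar G (insert w S)) A := by
  by_cases hadj : ∃ z ∈ A, (GStar G (insert w S)).Adj w z
  · obtain ⟨z, hz, hwz⟩ := hadj
    refine .inl (connOn_of_forall_reachIn (Set.mem_insert_of_mem w hz) ?_)
    rintro a (rfl | ha)
    · exact .of_adj hwz (Set.mem_insert _ _) (Set.mem_insert_of_mem _ hz)
    · exact (hA.2 a ha z hz).gStar_insert hw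
  · push Not at hadj
    exact .inr ⟨hA.1, fun a ha b hb => (hA.2 a ha b hb).gStar_insert_of_forall_not_adj hw hadj⟩

end GStar

/-- With `V = Fin n`, `N_m` the first `m` vertices: if
`G*(N_{m−1}) \ U` is connected (for `U ⊆ N_{m−1}`), then at least one of
`G*(N_m) \ U` and `G*(N_m) \ (U ∪ {m})` is connected, where `m` denotes the
last vertex of `N_m`. -/
theorem stmt_18 {n : ℕ} (G : SimpleGraph (Fin n)) (m : ℕ)
    (hm : 2 ≤ m) (hmn : m ≤ n)
    (U : Set (Fin n)) (hU : ∀ u ∈ U, (u : ℕ) < m - 1)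
    (hconn : ConnOn (GStar G {i : Fin n | (i : ℕ) < m - 1})
      ({i : Fin n | (i : ℕ) < m - 1} \ U)) :
    ConnOn (GStar G {i : Fin n | (i : ℕ) < m})
      ({i : Fin n | (i : ℕ) < m} \ U) ∨
    ConnOn (GStar G {i : Fin n | (i : ℕ) < m})
      ({i : Fin n | (i : ℕ) < m} \ (U ∪ {(⟨m - 1, by omega⟩ : Fin n)})) := by
  set w : Fin n := ⟨m - 1, by omega⟩
  have hwS : w ∉ {i : Fin n | (i : ℕ) < m - 1} := by simp [w]
  have hwU : w ∉ U := fun h => (hU w h).false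
  have hS : {i : Fin n | (i : ℕ) < m} = insert w {i : Fin n | (i : ℕ) < m - 1} := by
    ext i
    simp only [Set.mem_ofPred_eq, Set.mem_insert_iff, Fin.ext_iff, w]
    omega
  have hdiff : insert w {i : Fin n | (i : ℕ) < m - 1} \ (U ∪ {w}) =
      {i : Fin n | (i : ℕ) < m - 1} \ U := by
    ext i
    by_cases hi : i = w <;> simp_all
  rw [hS, Set.insert_sdiff_of_notMem _ hwU, hdiff]
  exact connOn_gStar_insert_or hwS hconn
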